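/- Let E(V) = (1/2)‖X - V V^T X‖_F^2 for V ∈ ℝ^{d×r}. Suppose V = (v_{i_1} | ⋯ | v_{i_r}) Q where v_{i_1},...,v_{i_r} are orthonormal eigenvectors of X X^T, Q ∈ O(r), and there is an eigenvector v of X X^T of unit norm, orthogonal to v_{i_1},...,v_{i_r}, with eigenvalue λ strictly larger than the eigenvalue λ_{i_j} of some v_{i_j}. Then for every ε ∈ (0,1], the matrix V(ε) obtained from V by replacing the column v_{i_j} by ε v + √(1-ε²) v_{i_j} (before multiplying by Q) satisfies V(ε)^T V(ε) = I_r and E(V(ε)) < E(V). -/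
import Mathlib

open Matrix

/-- The autoencoder loss E(V) = (1/2)‖X - V Vᵀ X‖_F². -/
noncomputable def Eloss {dd m r : ℕ} (X : Matrix (Fin dd) (Fin m) ℝ)
    (V : Matrix (Fin dd) (Fin r) ℝ) : ℝ :=
  (1 / 2) * Matrix.trace ((X - V * Vᵀ * X) * (X - V * Vᵀ * X)ᵀ)

lemma trace_conj_cols {dd r : ℕ} (A : Matrix (Fin dd) (Fin dd) ℝ) (w : Fin r → Fin dd → ℝ) :
    Matrix.trace ((Matrix.of fun a i => w i a)ᵀ * A * (Matrix.of fun a i => w i a)) =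
      ∑ i, w i ⬝ᵥ (A *ᵥ w i) := by
  simp only [Matrix.trace, Matrix.diag, Matrix.mul_apply, Matrix.transpose_apply,
    Matrix.of_apply, dotProduct, Matrix.mulVec, Finset.sum_mul, Finset.mul_sum]
  refine Finset.sum_congr rfl fun i _ => ?_
  rw [Finset.sum_comm]
  refine Finset.sum_congr rfl fun a _ => Finset.sum_congr rfl fun b _ => by ring

lemma eloss_eq {dd m r : ℕ} (X : Matrix (Fin dd) (Fin m) ℝ)
    (W : Matrix (Fin dd) (Fin r) ℝ) (hW : Wᵀ * W = 1) :
    Eloss X W = (1 / 2) * (Matrix.trace (X * Xᵀ) - Matrix.trace (Wᵀ * (X * Xᵀ) * W)) := by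
  set A := X * Xᵀ with hA
  set P := W * Wᵀ with hP
  have hPt : Pᵀ = P := by rw [hP, Matrix.transpose_mul, Matrix.transpose_transpose]
  have hPP : P * P = P := by
    rw [hP, Matrix.mul_assoc, ← Matrix.mul_assoc Wᵀ, hW, Matrix.one_mul]
  have hexp : (X - P * X) * (X - P * X)ᵀ = A - A * P - P * A + P * (A * P) := by
    rw [Matrix.transpose_sub, Matrix.transpose_mul, hPt]
    simp only [Matrix.sub_mul, Matrix.mul_sub, Matrix.mul_assoc, hA]
    abel
  have ht : Matrix.trace (P * A) = Matrix.trace (Wᵀ * A * W) := by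
    rw [hP, Matrix.mul_assoc, Matrix.trace_mul_comm]
  have ht2 : Matrix.trace (A * P) = Matrix.trace (Wᵀ * A * W) := by
    rw [Matrix.trace_mul_comm, ht]
  have ht3 : Matrix.trace (P * (A * P)) = Matrix.trace (Wᵀ * A * W) := by
    rw [Matrix.trace_mul_comm P (A * P), Matrix.mul_assoc A P P, hPP, ht2]
  rw [Eloss, hexp, Matrix.trace_add, Matrix.trace_sub, Matrix.trace_sub, ht, ht2, ht3]
  ring

lemma eloss_Q {dd m r : ℕ} (X : Matrix (Fin dd) (Fin m) ℝ)
    (W : Matrix (Fin dd) (Fin r) ℝ) (Q : Matrix (Fin r) (Fin r) ℝ) (hQ : Q * Qᵀ = 1) :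
    Eloss X (W * Q) = Eloss X W := by
  have h : (W * Q) * (W * Q)ᵀ = W * Wᵀ := by
    rw [Matrix.transpose_mul, Matrix.mul_assoc, ← Matrix.mul_assoc Q, hQ,
      Matrix.one_mul]
  rw [Eloss, Eloss, h]

/-- If V = (v_{i₁}|⋯|v_{i_r}) Q is built from orthonormal eigenvectors of X Xᵀ not all
corresponding to the top eigenvalues (there is a unit eigenvector v ⟂ all columns with
a strictly larger eigenvalue than that of column j), then replacing the j-th column by
ε v + √(1-ε²) v_{i_j} gives V(ε) with V(ε)ᵀ V(ε) = I and E(V(ε)) < E(V) for every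
ε ∈ (0,1]. -/
theorem stmt17 (dd m r : ℕ) (X : Matrix (Fin dd) (Fin m) ℝ)
    (vs : Fin r → Fin dd → ℝ) (lam : Fin r → ℝ)
    (hvs_on : ∀ i j, vs i ⬝ᵥ vs j = if i = j then (1 : ℝ) else 0)
    (hvs_eig : ∀ i, (X * Xᵀ) *ᵥ vs i = lam i • vs i)
    (v : Fin dd → ℝ) (lam' : ℝ)
    (hv_unit : v ⬝ᵥ v = 1)
    (hv_orth : ∀ i, v ⬝ᵥ vs i = 0)
    (hv_eig : (X * Xᵀ) *ᵥ v = lam' • v)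
    (j : Fin r) (hlam : lam j < lam')
    (Q : Matrix (Fin r) (Fin r) ℝ) (hQ : Qᵀ * Q = 1)
    (ε : ℝ) (hε : ε ∈ Set.Ioc (0 : ℝ) 1) :
    ((Matrix.of fun a i => if i = j then ε * v a + Real.sqrt (1 - ε ^ 2) * vs j a
        else vs i a) * Q)ᵀ *
      ((Matrix.of fun a i => if i = j then ε * v a + Real.sqrt (1 - ε ^ 2) * vs j a
        else vs i a) * Q) = 1 ∧
    Eloss X ((Matrix.of fun a i => if i = j then ε * v a + Real.sqrt (1 - ε ^ 2) * vs j a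
        else vs i a) * Q) <
      Eloss X ((Matrix.of fun a i => vs i a) * Q) := by
  obtain ⟨hε0, hε1⟩ := hε
  set s : ℝ := Real.sqrt (1 - ε ^ 2) with hs
  have hs2 : s ^ 2 = 1 - ε ^ 2 := Real.sq_sqrt (by nlinarith)
  set A := X * Xᵀ with hA
  -- the new j-th column
  set c : Fin dd → ℝ := ε • v + s • vs j with hc
  set w : Fin r → Fin dd → ℝ := fun i => if i = j then c else vs i with hw
  have hvo : ∀ i, vs i ⬝ᵥ v = 0 := fun i => by rw [dotProduct_comm]; exact hv_orth i
  have hWe : (Matrix.of fun a i => if i = j then ε * v a + s * vs j a else vs i a) =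
      (Matrix.of fun a i => w i a) := by
    ext a i
    by_cases hi : i = j <;> simp [hw, hc, hi]
  -- dot products
  have hjj : vs j ⬝ᵥ vs j = 1 := by simpa using hvs_on j j
  have hcc : c ⬝ᵥ c = 1 := by
    simp only [hc, dotProduct_add, add_dotProduct, smul_dotProduct, dotProduct_smul,
      smul_eq_mul, hv_unit, hv_orth, hvo, hjj]
    linear_combination hs2
  have hcvs : ∀ k, k ≠ j → c ⬝ᵥ vs k = 0 := by
    intro k hk
    have := hvs_on j k
    rw [if_neg (fun h => hk h.symm)] at this
    simp [hc, add_dotProduct, smul_dotProduct, hv_orth, this]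
  have hvsc : ∀ k, k ≠ j → vs k ⬝ᵥ c = 0 := by
    intro k hk
    rw [dotProduct_comm]; exact hcvs k hk
  have hdot : ∀ i k, w i ⬝ᵥ w k = if i = k then (1 : ℝ) else 0 := by
    intro i k
    rcases eq_or_ne i j with hi | hi
    · rcases eq_or_ne k j with hk | hk
      · simp only [hw]
        rw [if_pos hi, if_pos hk, hcc, if_pos (hi.trans hk.symm)]
      · simp only [hw]
        rw [if_pos hi, if_neg hk, hcvs k hk,
          if_neg (fun h => hk (by rw [← h]; exact hi))]
    · rcases eq_or_ne k j with hk | hk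
      · simp only [hw]
        rw [if_neg hi, if_pos hk, hvsc i hi, if_neg (fun h => hi (h.trans hk))]
      · simp only [hw]
        rw [if_neg hi, if_neg hk]
        exact hvs_on i k
  -- orthonormality of Wε and W
  have hWeon : (Matrix.of fun a i => w i a)ᵀ * (Matrix.of fun a i => w i a) = 1 := by
    ext i k
    simp only [Matrix.mul_apply, Matrix.transpose_apply, Matrix.of_apply, Matrix.one_apply]
    simpa [dotProduct] using hdot i k
  have hWon : (Matrix.of fun a i => vs i a)ᵀ * (Matrix.of fun a i => vs i a) = 1 := by
    ext i k
    simp only [Matrix.mul_apply, Matrix.transpose_apply, Matrix.of_apply, Matrix.one_apply]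
    simpa [dotProduct] using hvs_on i k
  have hQQ : Q * Qᵀ = 1 := mul_eq_one_comm.mp hQ
  -- Rayleigh quotients
  have hray_vs : ∀ i, vs i ⬝ᵥ (A *ᵥ vs i) = lam i := by
    intro i
    have hii : vs i ⬝ᵥ vs i = 1 := by simpa using hvs_on i i
    rw [hvs_eig i, dotProduct_smul, smul_eq_mul, hii, mul_one]
  have hAc : A *ᵥ c = (ε * lam') • v + (s * lam j) • vs j := by
    rw [hc, Matrix.mulVec_add, Matrix.mulVec_smul, Matrix.mulVec_smul, hv_eig, hvs_eig,
      smul_smul, smul_smul]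
  have hray_c : c ⬝ᵥ (A *ᵥ c) = ε ^ 2 * lam' + (1 - ε ^ 2) * lam j := by
    rw [hAc]
    simp only [hc, dotProduct_add, add_dotProduct, smul_dotProduct, dotProduct_smul,
      smul_eq_mul, hv_unit, hv_orth, hvo, hjj]
    linear_combination lam j * hs2
  constructor
  · rw [hWe, Matrix.transpose_mul, Matrix.mul_assoc, ← Matrix.mul_assoc _ _ Q, hWeon,
      Matrix.one_mul, hQ]
  · rw [hWe, eloss_Q X _ Q hQQ, eloss_Q X _ Q hQQ, eloss_eq X _ hWeon, eloss_eq X _ hWon,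
      ← hA, trace_conj_cols, trace_conj_cols]
    have hsum : ∑ i, vs i ⬝ᵥ (A *ᵥ vs i) < ∑ i, w i ⬝ᵥ (A *ᵥ w i) := by
      apply Finset.sum_lt_sum
      · intro i _
        rcases eq_or_ne i j with hi | hi
        · rw [hi]
          simp only [hw, if_pos rfl, hray_c, hray_vs j]
          nlinarith
        · simp only [hw, if_neg hi]
          exact le_rfl
      · exact ⟨j, Finset.mem_univ j, by
          simp only [hw, if_pos rfl, hray_c, hray_vs j]
          nlinarith [mul_pos (mul_pos hε0 hε0) (sub_pos.mpr hlam)]⟩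
    linarith
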